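/- Knill–Laflamme detectability for the spin-25/2 code: for any operator E with ⟨m'|E|m⟩ = 0 whenever |m'−m| > 2, the off-diagonal matrix element vanishes, ⟨0_L| E |1_L⟩ = 0. -/
import Mathlib


open Matrix

/-- Basis vector `|m⟩` of `ℂ^26`, index `k : Fin 26` encodes `m = k - 25/2`. -/
def ket26' (k : Fin 26) : Fin 26 → ℂ := Pi.single k 1

noncomputable def code0 : Fin 26 → ℂ :=
  (Real.sqrt (1/16) : ℂ) • ket26' 0 + (Real.sqrt (10/16) : ℂ) • ket26' 10
    + (Real.sqrt (5/16) : ℂ) • ket26' 20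

noncomputable def code1 : Fin 26 → ℂ :=
  (Real.sqrt (1/16) : ℂ) • ket26' 25 + (Real.sqrt (10/16) : ℂ) • ket26' 15
    + (Real.sqrt (5/16) : ℂ) • ket26' 5

/-- Knill–Laflamme detectability for the spin-25/2 code: any operator
`E` that changes the magnetic quantum number by at most `±2`
(`⟨m'|E|m⟩ = 0` whenever `|m' − m| > 2`) has vanishing off-diagonal matrix element
`⟨0_L|E|1_L⟩ = 0`. -/
theorem spinCode_KL_offdiagonal
    (E : Matrix (Fin 26) (Fin 26) ℂ)
    (hE : ∀ k' k : Fin 26, 2 < |(k' : ℤ) - (k : ℤ)| → E k' k = 0) :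
    star code0 ⬝ᵥ E.mulVec code1 = 0 := by
  have h : ∀ a b : Fin 26, a ∈ ([0,10,20] : List (Fin 26)) → b ∈ ([25,15,5] : List (Fin 26)) → E a b = 0 := by
    intro a b ha hb
    fin_cases ha <;> fin_cases hb <;> exact hE _ _ (by decide)
  have hs : ∀ k : Fin 26, star (Pi.single k (1:ℂ) : Fin 26 → ℂ) = Pi.single k 1 := by
    intro k; funext i; simp [Pi.single_apply, apply_ite]
  simp [code0, code1, ket26', mulVec_add, mulVec_smul, mulVec_single,
    dotProduct_add, dotProduct_smul, add_dotProduct, smul_dotProduct,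
    star_add, star_smul, hs, single_dotProduct, Pi.single_apply,
    h 0 25 (by simp) (by simp), h 0 15 (by simp) (by simp), h 0 5 (by simp) (by simp),
    h 10 25 (by simp) (by simp), h 10 15 (by simp) (by simp), h 10 5 (by simp) (by simp),
    h 20 25 (by simp) (by simp), h 20 15 (by simp) (by simp), h 20 5 (by simp) (by simp)]
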